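/- arXiv:2202.10962 — 7 statements merged into one kernel-verified Lean document; each statement's English description precedes it below -/
import Mathlib

section
/- The set of points (x₁,x₂,x₃) satisfying -½x₂ + 3x₃ ≤ 0, -x₃ ≤ 0, -½x₁ + ½x₂ - (7/2)x₃ ≤ 0, ½x₁ + (3/2)x₃ ≤ ½, with x₁ ∈ ℤ and x₃ ∈ {0,1}, equals {(0,0,0)} ∪ {(1, x₂, 0) : x₂ ∈ [0,1]}. -/
/-!
The binary variable cannot be 1: then the fourth constraint forces `x₁ ≤ -2`, the first
`x₂ ≥ 6`, and the third `x₂ ≤ x₁ + 7 ≤ 5`. With `x₃ = 0` the constraints reduce to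
`0 ≤ x₂ ≤ x₁ ≤ 1`, and integrality leaves `x₁ ∈ {0, 1}`.
-/

theorem Int.cast_eq_zero_or_one_of_mem_Icc {R : Type*} [Ring R] [LinearOrder R]
    [IsStrictOrderedRing R] {a : R} {n : ℤ} (ha : a = n) (h0 : 0 ≤ a)
    (h1 : a ≤ 1) : a = 0 ∨ a = 1 := by
  subst ha
  have hn : n = 0 ∨ n = 1 := by
    have : 0 ≤ n := by exact_mod_cast h0
    have : n ≤ 1 := by exact_mod_cast h1
    omega
  rcases hn with rfl | rfl <;> simp

theorem fin_three_eq_vec_iff {α : Type*} (x : Fin 3 → α) (a b c : α) :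
    x = ![a, b, c] ↔ x 0 = a ∧ x 1 = b ∧ x 2 = c := by
  simp [funext_iff, Fin.forall_fin_succ]

theorem exists_segment_point_eq_iff (x : Fin 3 → ℝ) :
    (∃ t : ℝ, 0 ≤ t ∧ t ≤ 1 ∧ x = ![1, t, 0]) ↔ x 0 = 1 ∧ 0 ≤ x 1 ∧ x 1 ≤ 1 ∧ x 2 = 0 := by
  simp only [fin_three_eq_vec_iff]
  constructor
  · rintro ⟨t, h0, h1, ha, rfl, hc⟩
    exact ⟨ha, h0, h1, hc⟩
  · rintro ⟨ha, h0, h1, hc⟩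
    exact ⟨_, h0, h1, ha, rfl, hc⟩

theorem milp_feasible_iff (a b c : ℝ) :
    (-(1/2) * b + 3 * c ≤ 0 ∧ -c ≤ 0 ∧ -(1/2) * a + (1/2) * b - (7/2) * c ≤ 0 ∧
        (1/2) * a + (3/2) * c ≤ 1/2 ∧ (∃ n : ℤ, a = n) ∧ (c = 0 ∨ c = 1)) ↔
      (a = 0 ∧ b = 0 ∧ c = 0) ∨ (a = 1 ∧ 0 ≤ b ∧ b ≤ 1 ∧ c = 0) := by
  constructor
  · rintro ⟨h₁, -, h₃, h₄, ⟨n, hn⟩, hc⟩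
    obtain rfl : c = 0 := hc.resolve_right fun hc => by subst hc; linarith
    obtain rfl | rfl := Int.cast_eq_zero_or_one_of_mem_Icc hn (by linarith) (by linarith)
    · exact Or.inl ⟨rfl, by linarith, rfl⟩
    · exact Or.inr ⟨rfl, by linarith, by linarith, rfl⟩
  · rintro (⟨rfl, rfl, rfl⟩ | ⟨rfl, hb₀, hb₁, rfl⟩)
    · exact ⟨by norm_num, by norm_num, by norm_num, by norm_num, ⟨0, by simp⟩, Or.inl rfl⟩
    · exact ⟨by linarith, by norm_num, by linarith, by norm_num, ⟨1, by simp⟩, Or.inl rfl⟩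

theorem stmt1 :
    {x : Fin 3 → ℝ |
        -(1/2) * x 1 + 3 * x 2 ≤ 0 ∧
        -(x 2) ≤ 0 ∧
        -(1/2) * x 0 + (1/2) * x 1 - (7/2) * x 2 ≤ 0 ∧
        (1/2) * x 0 + (3/2) * x 2 ≤ 1/2 ∧
        (∃ n : ℤ, x 0 = (n : ℝ)) ∧
        (x 2 = 0 ∨ x 2 = 1)} =
      ({![0,0,0]} : Set (Fin 3 → ℝ)) ∪
        {p : Fin 3 → ℝ | ∃ t : ℝ, 0 ≤ t ∧ t ≤ 1 ∧ p = ![1, t, 0]} := by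
  ext x
  rw [Set.mem_ofPred_eq, milp_feasible_iff, Set.mem_union, Set.mem_singleton_iff,
    fin_three_eq_vec_iff, Set.mem_ofPred_eq, exists_segment_point_eq_iff]
end

section
/- The intersection of the polytope conv{(0,0,0),(1,0,0),(1,1,0),(-1/2,3,1/2)} with the half-space -10x₁ + 10x₂ + x₃ ≤ 0 equals the convex hull of {(0,0,0), (1,0,0), (1,1,0), (61/91, 60/91, 10/91)}. -/
lemma hull4 (p0 p1 p2 p3 : Fin 3 → ℝ) :
    convexHull ℝ ({p0, p1, p2, p3} : Set (Fin 3 → ℝ)) =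
      {x | ∃ a b c d : ℝ, 0 ≤ a ∧ 0 ≤ b ∧ 0 ≤ c ∧ 0 ≤ d ∧ a + b + c + d = 1 ∧
        a • p0 + b • p1 + c • p2 + d • p3 = x} := by
  apply Set.Subset.antisymm
  · apply convexHull_min
    · rintro x (rfl | rfl | rfl | rfl)
      · exact ⟨1, 0, 0, 0, by norm_num, by norm_num, by norm_num, by norm_num, by norm_num,
          by module⟩
      · exact ⟨0, 1, 0, 0, by norm_num, by norm_num, by norm_num, by norm_num, by norm_num,
          by module⟩
      · exact ⟨0, 0, 1, 0, by norm_num, by norm_num, by norm_num, by norm_num, by norm_num,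
          by module⟩
      · exact ⟨0, 0, 0, 1, by norm_num, by norm_num, by norm_num, by norm_num, by norm_num,
          by module⟩
    · rintro x ⟨a, b, c, d, ha, hb, hc, hd, hs, hx⟩ y ⟨a', b', c', d', ha', hb', hc', hd', hs', hy⟩
        s t hsn htn hst
      refine ⟨s * a + t * a', s * b + t * b', s * c + t * c', s * d + t * d',
        by positivity, by positivity, by positivity, by positivity,
        by linear_combination s * hs + t * hs' + hst, ?_⟩
      rw [← hx, ← hy]
      module
  · rintro x ⟨a, b, c, d, ha, hb, hc, hd, hs, rfl⟩
    have h := (convex_convexHull ℝ ({p0, p1, p2, p3} : Set (Fin 3 → ℝ))).sum_mem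
      (t := Finset.univ) (w := ![a, b, c, d]) (z := ![p0, p1, p2, p3])
      (by intro i _; fin_cases i <;> assumption)
      (by simp [Fin.sum_univ_four]; linarith)
      (by intro i _; fin_cases i <;> simp [subset_convexHull] <;>
        exact subset_convexHull ℝ _ (by simp))
    simpa [Fin.sum_univ_four] using h

theorem stmt5 :
    convexHull ℝ ({![0,0,0], ![1,0,0], ![1,1,0], ![-(1/2), 3, 1/2]} : Set (Fin 3 → ℝ)) ∩
        {x : Fin 3 → ℝ | -10 * x 0 + 10 * x 1 + x 2 ≤ 0} =
      convexHull ℝ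
        ({![0,0,0], ![1,0,0], ![1,1,0], ![61/91, 60/91, 10/91]} : Set (Fin 3 → ℝ)) := by
  rw [hull4, hull4]
  apply Set.Subset.antisymm
  · rintro x ⟨⟨a, b, c, d, ha, hb, hc, hd, hs, hx⟩, hcut⟩
    have h0 : x 0 = b + c - d / 2 := by rw [← hx]; simp; ring
    have h1 : x 1 = c + 3 * d := by rw [← hx]; simp; ring
    have h2 : x 2 = d / 2 := by rw [← hx]; simp; ring
    have hcut' : -10 * b + (71 / 2) * d ≤ 0 := by
      simp only [Set.mem_setOf_eq] at hcut
      rw [h0, h1, h2] at hcut; linarith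
    refine ⟨a, b - 71 / 20 * d, c, 91 / 20 * d, ha, by linarith, hc, by linarith,
      by linarith, ?_⟩
    rw [← hx]
    funext i
    fin_cases i <;> simp <;> ring
  · rintro x ⟨a, b, c, d, ha, hb, hc, hd, hs, hx⟩
    constructor
    · refine ⟨a, b + 71 / 91 * d, c, 20 / 91 * d, ha, by linarith, hc, by linarith,
        by linarith, ?_⟩
      rw [← hx]
      funext i
      fin_cases i <;> simp <;> ring
    · have h0 : x 0 = b + c + 61 / 91 * d := by rw [← hx]; simp; ring
      have h1 : x 1 = c + 60 / 91 * d := by rw [← hx]; simp; ring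
      have h2 : x 2 = 10 / 91 * d := by rw [← hx]; simp; ring
      simp only [Set.mem_setOf_eq]
      rw [h0, h1, h2]
      nlinarith
end

section
/- For every ε ∈ (0, 0.1), the intersection of conv{(0,0,0),(1,0,0),(1,1,0),(-1/2,3,1/2)} with the half-space -x₁ + x₃ ≤ 1 - ε equals the convex hull of the six points (0,0,0), (1,0,0), (1,1,0), (-1/2 + 3ε/4, 3 - 3ε/2, 1/2 - ε/4), (-1/2 + 3ε/4, 3 - ε, 1/2 - ε/4), and (-1/2 + ε/2, 3 - 3ε, 1/2 - ε/2). -/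
/-!
The tetrahedron is the cone with apex `D = (-1/2, 3, 1/2)` over the triangle `{0, e₁, e₁ + e₂}`,
and `f x = -x₀ + x₂` is below `1 - ε` on the base but equals `1` at `D`. For such a cone, every
point lies on a segment `[y, D]` with `y` in the base, and the part of that segment in `f ≤ c` is
`[y, q]`, where `q` is the point where the segment crosses `f = c`. Although `y ↦ q` is not
affine, `(f D - f y) • q = (f D - c) • y + (c - f y) • D` is, so `q` is a convex combination of the
three crossing points on the edges of the cone. These are the three new vertices.
-/

namespace ConvexHullCut

variable {𝕜 E : Type*} [Field 𝕜] [AddCommGroup E] [Module 𝕜 E]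
  (f : E →ₗ[𝕜] 𝕜) (c : 𝕜) (d : E)

/-- The point where the line through `v` and `d` meets the hyperplane `f = c`. -/
def cutPoint (v : E) : E :=
  ((f d - c) / (f d - f v)) • v + ((c - f v) / (f d - f v)) • d

variable {f c d}

theorem smul_cutPoint {v : E} (hv : f v ≠ f d) :
    (f d - f v) • cutPoint f c d v = (f d - c) • v + (c - f v) • d := by
  have : f d - f v ≠ 0 := sub_ne_zero.mpr hv.symm
  simp only [cutPoint, smul_add, smul_smul, mul_div_cancel₀ _ this]

theorem apply_cutPoint {v : E} (hv : f v ≠ f d) : f (cutPoint f c d v) = c := by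
  have : f d - f v ≠ 0 := sub_ne_zero.mpr hv.symm
  simp only [cutPoint, map_add, map_smul, smul_eq_mul]
  field_simp
  ring

variable [LinearOrder 𝕜] [IsStrictOrderedRing 𝕜]

theorem cutPoint_mem_segment {v : E} (hv : f v ≤ c) (hd : c < f d) :
    cutPoint f c d v ∈ segment 𝕜 v d := by
  have hD : 0 < f d - f v := by linarith
  refine ⟨_, _, div_nonneg (by linarith) hD.le, div_nonneg (by linarith) hD.le, ?_, rfl⟩
  field_simp
  ring

theorem cutPoint_mem_segment_cutPoint {y₁ y₂ : E} (h₁ : f y₁ < f d) (h₂ : f y₂ < f d)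
    {a b : 𝕜} (ha : 0 ≤ a) (hb : 0 ≤ b) (hab : a + b = 1) :
    cutPoint f c d (a • y₁ + b • y₂) ∈
      segment 𝕜 (cutPoint f c d y₁) (cutPoint f c d y₂) := by
  have hD₁ : 0 < f d - f y₁ := by linarith
  have hD₂ : 0 < f d - f y₂ := by linarith
  have hD : f d - f (a • y₁ + b • y₂) = a * (f d - f y₁) + b * (f d - f y₂) := by
    simp only [map_add, map_smul, smul_eq_mul]
    linear_combination (-f d) * hab
  have hDpos : 0 < a * (f d - f y₁) + b * (f d - f y₂) := by
    rcases ha.lt_or_eq with ha | rfl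
    · positivity
    · simp only [zero_add] at hab; subst hab; simpa using hD₂
  refine ⟨a * (f d - f y₁) / (a * (f d - f y₁) + b * (f d - f y₂)),
    b * (f d - f y₂) / (a * (f d - f y₁) + b * (f d - f y₂)), by positivity, by positivity,
    by field_simp, ?_⟩
  apply smul_right_injective E hDpos.ne'
  dsimp only
  rw [smul_add, smul_smul, smul_smul, mul_div_cancel₀ _ hDpos.ne', mul_div_cancel₀ _ hDpos.ne',
    mul_smul, mul_smul, smul_cutPoint h₁.ne, smul_cutPoint h₂.ne, ← hD,
    smul_cutPoint (by linarith)]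
  simp only [map_add, map_smul, smul_eq_mul]
  linear_combination (norm := module) hab • (c • d)

theorem mem_segment_cutPoint {x y : E} (hx : x ∈ segment 𝕜 d y) (hy : f y < c) (hxc : f x ≤ c)
    (hd : c < f d) : x ∈ segment 𝕜 y (cutPoint f c d y) := by
  rw [segment_symm] at hx
  obtain ⟨a, b, ha, hb, hab, rfl⟩ := hx
  have hD : 0 < f d - f y := by linarith
  set β := (c - f y) / (f d - f y) with hβ_def
  have hcut : cutPoint f c d y = (1 - β) • y + β • d := by
    rw [cutPoint, hβ_def]
    congr 2
    field_simp
    ring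
  clear_value β
  have hβ : 0 < β := hβ_def ▸ div_pos (by linarith) hD
  have hbβ : b ≤ β := by
    rw [hβ_def, le_div_iff₀ hD]
    simp only [map_add, map_smul, smul_eq_mul] at hxc
    linear_combination hxc - f y * hab
  refine ⟨1 - b / β, b / β, by rwa [sub_nonneg, div_le_one hβ], by positivity, by ring, ?_⟩
  rw [hcut, smul_add, smul_smul, smul_smul, ← add_assoc, ← add_smul, div_mul_cancel₀ b hβ.ne']
  congr 2
  field_simp
  linear_combination (-β) * hab

theorem cutPoint_mem_convexHull_image {s : Set E} (hs : ∀ v ∈ s, f v < f d) {y : E}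
    (hy : y ∈ convexHull 𝕜 s) : cutPoint f c d y ∈ convexHull 𝕜 (cutPoint f c d '' s) := by
  have hconv : Convex 𝕜
      {y | f y < f d ∧ cutPoint f c d y ∈ convexHull 𝕜 (cutPoint f c d '' s)} := by
    rintro y₁ ⟨h₁, h₁'⟩ y₂ ⟨h₂, h₂'⟩ a b ha hb hab
    exact Set.mem_ofPred.mpr ⟨convex_halfSpace_lt f.isLinear (f d) h₁ h₂ ha hb hab,
      (convex_convexHull 𝕜 _).segment_subset h₁' h₂'
        (cutPoint_mem_segment_cutPoint h₁ h₂ ha hb hab)⟩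
  have hsub : s ⊆ {y | f y < f d ∧ cutPoint f c d y ∈ convexHull 𝕜 (cutPoint f c d '' s)} :=
    fun v hv => Set.mem_ofPred.mpr ⟨hs v hv, subset_convexHull 𝕜 _ (Set.mem_image_of_mem _ hv)⟩
  exact (convexHull_min hsub hconv hy).2

theorem convexHull_insert_inter_halfSpace {s : Set E} (hs : ∀ v ∈ s, f v < c) (hd : c < f d) :
    convexHull 𝕜 (insert d s) ∩ {x | f x ≤ c} = convexHull 𝕜 (s ∪ cutPoint f c d '' s) := by
  have hsd : ∀ v ∈ s, f v < f d := fun v hv => (hs v hv).trans hd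
  apply Set.Subset.antisymm
  · rintro x ⟨hx, hxc⟩
    rcases s.eq_empty_or_nonempty with rfl | hne
    · rw [insert_empty_eq, convexHull_singleton, Set.mem_singleton_iff] at hx
      subst hx
      exact absurd hxc (not_le.mpr hd)
    rw [convexHull_insert hne, convexJoin_singleton_left, Set.mem_iUnion₂] at hx
    obtain ⟨y, hy, hxy⟩ := hx
    have hyc : f y < c :=
      convexHull_min hs (convex_halfSpace_lt f.isLinear c) hy
    exact (convex_convexHull 𝕜 _).segment_subset (convexHull_mono Set.subset_union_left hy)
      (convexHull_mono Set.subset_union_right (cutPoint_mem_convexHull_image hsd hy))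
      (mem_segment_cutPoint hxy hyc hxc hd)
  · refine convexHull_min ?_ ((convex_convexHull 𝕜 _).inter (convex_halfSpace_le f.isLinear c))
    rintro _ (hv | ⟨v, hv, rfl⟩)
    · exact ⟨subset_convexHull 𝕜 _ (Set.mem_insert_of_mem _ hv), (hs _ hv).le⟩
    · exact ⟨segment_subset_convexHull (Set.mem_insert_of_mem _ hv) (Set.mem_insert _ _)
        (cutPoint_mem_segment (hs v hv).le hd), (apply_cutPoint (hsd v hv).ne).le⟩

end ConvexHullCut

open ConvexHullCut

theorem stmt6 (ε : ℝ) (hε0 : 0 < ε) (hε1 : ε < 0.1) :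
    convexHull ℝ ({![0,0,0], ![1,0,0], ![1,1,0], ![-(1/2), 3, 1/2]} : Set (Fin 3 → ℝ)) ∩
        {x : Fin 3 → ℝ | -(x 0) + x 2 ≤ 1 - ε} =
      convexHull ℝ
        ({![0,0,0], ![1,0,0], ![1,1,0],
          ![-(1/2) + 3*ε/4, 3 - 3*ε/2, 1/2 - ε/4],
          ![-(1/2) + 3*ε/4, 3 - ε, 1/2 - ε/4],
          ![-(1/2) + ε/2, 3 - 3*ε, 1/2 - ε/2]} : Set (Fin 3 → ℝ)) := by
  have hε : ε < 1 := by norm_num at hε1; linarith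
  let f : (Fin 3 → ℝ) →ₗ[ℝ] ℝ :=
    -LinearMap.proj (R := ℝ) (φ := fun _ : Fin 3 => ℝ) 0 + LinearMap.proj 2
  have hf (x : Fin 3 → ℝ) : f x = -(x 0) + x 2 := rfl
  have hcut := convexHull_insert_inter_halfSpace (f := f) (c := 1 - ε) (d := ![-(1/2), 3, 1/2])
    (s := {![0,0,0], ![1,0,0], ![1,1,0]})
    (by rintro v (rfl | rfl | rfl) <;> simp [hf] <;> linarith) (by simp [hf]; linarith)
  have hO : cutPoint f (1 - ε) ![-(1/2), 3, 1/2] ![0,0,0] =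
      ![-(1/2) + ε/2, 3 - 3*ε, 1/2 - ε/2] := by
    ext i; fin_cases i <;> simp [cutPoint, hf] <;> ring
  have hA : cutPoint f (1 - ε) ![-(1/2), 3, 1/2] ![1,0,0] =
      ![-(1/2) + 3*ε/4, 3 - 3*ε/2, 1/2 - ε/4] := by
    ext i; fin_cases i <;> simp [cutPoint, hf] <;> ring
  have hB : cutPoint f (1 - ε) ![-(1/2), 3, 1/2] ![1,1,0] =
      ![-(1/2) + 3*ε/4, 3 - ε, 1/2 - ε/4] := by
    ext i; fin_cases i <;> simp [cutPoint, hf] <;> ring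
  rw [Set.image_insert_eq, Set.image_insert_eq, Set.image_singleton, hO, hA, hB] at hcut
  convert hcut using 3
  · ext; simp only [Set.mem_insert_iff, Set.mem_singleton_iff]; tauto
  · rfl
  · ext; simp only [Set.mem_insert_iff, Set.mem_singleton_iff, Set.mem_union]; tauto
end

section
/- For every ε ∈ (0, 0.1), the intersection of conv{(0,0,0),(1,0,0),(1,1,0),(-1/2,3,1/2)} with the half-space -x₁ + 10x₂ ≤ 61/2 - ε equals the convex hull of the six points (0,0,0), (1,0,0), (1,1,0), (-1/2 + ε/21, 3 - 2ε/21, 1/2 - ε/63), (-1/2 + 3ε/43, 3 - 4ε/43, 1/2 - ε/43), and (-1/2 + ε/61, 3 - 6ε/61, 1/2 - ε/61). -/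
/-! Of the four vertices of the tetrahedron only the apex `D = (-1/2, 3, 1/2)` violates the cut.
Cutting the convex hull of a finite set `s` and an apex `D` by a half-space `f ≤ t` that contains
`s` but not `D` leaves the convex hull of `s` together with the points where the edges `[v, D]`,
`v ∈ s`, cross the hyperplane `f = t`: a point `d • D + ∑ w v • v` below the hyperplane is
redistributed along these edges. Here the three crossings are the three new vertices. -/

open AffineMap Set

section EdgeCrossing

variable {𝕜 E : Type*} [Field 𝕜] [AddCommGroup E] [Module 𝕜 E]

def edgeCrossing (f : E →ₗ[𝕜] 𝕜) (t : 𝕜) (v D : E) : E :=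
  lineMap v D ((t - f v) / (f D - f v))

lemma LinearMap.map_lineMap_eq (f : E →ₗ[𝕜] 𝕜) (v D : E) (r : 𝕜) :
    f (lineMap v D r) = f v + r * (f D - f v) := by
  rw [lineMap_apply_module, map_add, map_smul, map_smul, smul_eq_mul, smul_eq_mul]
  ring

variable {f : E →ₗ[𝕜] 𝕜} {t : 𝕜} {v D : E}

lemma map_edgeCrossing (h : f v ≠ f D) : f (edgeCrossing f t v D) = t := by
  rw [edgeCrossing, f.map_lineMap_eq, div_mul_cancel₀ _ (sub_ne_zero.2 h.symm)]
  ring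

variable [LinearOrder 𝕜] [IsStrictOrderedRing 𝕜]

lemma edgeCrossing_mem_segment (hv : f v ≤ t) (hD : t ≤ f D) :
    edgeCrossing f t v D ∈ segment 𝕜 v D :=
  lineMap_mem_segment 𝕜 v D ⟨div_nonneg (sub_nonneg.2 hv) (sub_nonneg.2 (hv.trans hD)),
    div_le_one_of_le₀ (sub_le_sub_right hD _) (sub_nonneg.2 (hv.trans hD))⟩

lemma segment_inter_le_subset_segment_edgeCrossing (hv : f v < t) (hD : t ≤ f D) :
    segment 𝕜 v D ∩ {x | f x ≤ t} ⊆ segment 𝕜 v (edgeCrossing f t v D) := by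
  rintro _ ⟨hx, hxt⟩
  obtain ⟨r, ⟨hr0, -⟩, rfl⟩ := (segment_eq_image_lineMap 𝕜 v D).subset hx
  have hvD : 0 < f D - f v := by linarith
  set ρ := (t - f v) / (f D - f v)
  have hρ : 0 < ρ := div_pos (sub_pos.2 hv) hvD
  have hrρ : r ≤ ρ := by
    rw [mem_ofPred_eq, f.map_lineMap_eq] at hxt
    rw [le_div_iff₀ hvD]
    linarith
  rw [edgeCrossing, segment_eq_image_lineMap]
  refine ⟨r / ρ, ⟨div_nonneg hr0 hρ.le, div_le_one_of_le₀ hrρ hρ.le⟩, ?_⟩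
  rw [lineMap_lineMap_right, div_mul_cancel₀ _ hρ.ne']

variable {s : Finset E}

/- With `G = ∑ w v (t - f v)`, the point is the convex combination, with weights
`w v (1 + d (t - f v) / G)`, of the points `lineMap v D (d (t - f v) / (G + d (t - f v)))`,
which lie below the hyperplane exactly because of `hcut`. -/
lemma smul_add_sum_smul_mem_convexHull_edgeCrossing (hs : ∀ v ∈ s, f v < t) (hD : t < f D)
    {d : 𝕜} {w : E → 𝕜} (hd : 0 < d) (hw : ∀ v ∈ s, 0 ≤ w v) (hsum : d + ∑ v ∈ s, w v = 1)
    (hcut : d * (f D - t) ≤ ∑ v ∈ s, w v * (t - f v)) :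
    d • D + ∑ v ∈ s, w v • v ∈ convexHull 𝕜 ((s : Set E) ∪ (edgeCrossing f t · D) '' s) := by
  set G := ∑ v ∈ s, w v * (t - f v)
  have hG : 0 < G := (mul_pos hd (sub_pos.2 hD)).trans_le hcut
  have hGv : ∀ v ∈ s, 0 < G + d * (t - f v) := fun v hv =>
    add_pos_of_pos_of_nonneg hG (mul_nonneg hd.le (sub_pos.2 (hs v hv)).le)
  have hdG : ∑ v ∈ s, d * (w v * (t - f v)) / G = d := by
    rw [← Finset.sum_div, ← Finset.mul_sum, mul_div_cancel_right₀ _ hG.ne']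
  have hsplit : ∀ v ∈ s,
      (w v + d * (w v * (t - f v)) / G) • lineMap v D (d * (t - f v) / (G + d * (t - f v))) =
        w v • v + (d * (w v * (t - f v)) / G) • D := by
    intro v hv
    rw [lineMap_apply_module, smul_add, smul_smul, smul_smul]
    congr 2
    · field_simp [(hGv v hv).ne']
      ring
    · field_simp [(hGv v hv).ne']
  have hy : d • D + ∑ v ∈ s, w v • v =
      ∑ v ∈ s, (w v • v + (d * (w v * (t - f v)) / G) • D) := by
    rw [Finset.sum_add_distrib, ← Finset.sum_smul, hdG, add_comm]
  rw [hy, ← Finset.sum_congr rfl hsplit]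
  refine (convex_convexHull 𝕜 _).sum_mem (fun v hv => ?_) ?_ (fun v hv => ?_)
  · have hwv := hw v hv
    have hgv := (sub_pos.2 (hs v hv)).le
    positivity
  · rw [Finset.sum_add_distrib, hdG, add_comm, hsum]
  · refine segment_subset_convexHull (mem_union_left _ hv)
      (mem_union_right _ (mem_image_of_mem _ hv))
      (segment_inter_le_subset_segment_edgeCrossing (hs v hv) hD.le
        ⟨lineMap_mem_segment 𝕜 v D ⟨?_, ?_⟩, ?_⟩)
    · have hgv := (sub_pos.2 (hs v hv)).le
      positivity
    · exact div_le_one_of_le₀ (le_add_of_nonneg_left hG.le) (hGv v hv).le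
    · rw [mem_ofPred_eq, f.map_lineMap_eq, div_mul_eq_mul_div, ← le_sub_iff_add_le',
        div_le_iff₀ (hGv v hv)]
      nlinarith [mul_le_mul_of_nonneg_right hcut (sub_pos.2 (hs v hv)).le]

lemma convexHull_insert_inter_halfSpace_subset (hs : ∀ v ∈ s, f v < t) (hD : t < f D) :
    convexHull 𝕜 (insert D (s : Set E)) ∩ {x | f x ≤ t} ⊆
      convexHull 𝕜 ((s : Set E) ∪ (edgeCrossing f t · D) '' s) := by
  classical
  rintro y ⟨hy, hyt⟩
  have hDs : D ∉ s := fun h => (hs D h).not_gt hD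
  rw [← Finset.coe_insert, Finset.mem_convexHull'] at hy
  obtain ⟨w, hw0, hw1, rfl⟩ := hy
  rw [Finset.sum_insert hDs] at hw1 ⊢
  rw [mem_ofPred_eq, Finset.sum_insert hDs] at hyt
  have hw : ∀ v ∈ s, 0 ≤ w v := fun v hv => hw0 v (Finset.mem_insert_of_mem hv)
  rcases (hw0 D (s.mem_insert_self D)).eq_or_lt with hd | hd
  · rw [← hd, zero_add] at hw1
    rw [← hd, zero_smul, zero_add]
    exact convexHull_mono subset_union_left (Finset.mem_convexHull'.2 ⟨w, hw, hw1, rfl⟩)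
  refine smul_add_sum_smul_mem_convexHull_edgeCrossing hs hD hd hw hw1 ?_
  simp only [map_add, map_sum, map_smul, smul_eq_mul] at hyt
  have ht : t = t * (w D + ∑ v ∈ s, w v) := by rw [hw1, mul_one]
  simp only [mul_sub, Finset.sum_sub_distrib, ← Finset.sum_mul]
  linarith

theorem convexHull_insert_inter_halfSpace (hs : ∀ v ∈ s, f v < t) (hD : t < f D) :
    convexHull 𝕜 (insert D (s : Set E)) ∩ {x | f x ≤ t} =
      convexHull 𝕜 ((s : Set E) ∪ (edgeCrossing f t · D) '' s) := by
  refine (convexHull_insert_inter_halfSpace_subset hs hD).antisymm <|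
    convexHull_min ?_ ((convex_convexHull 𝕜 _).inter (convex_halfSpace_le f.isLinear t))
  rintro _ (hv | ⟨v, hv, rfl⟩)
  · exact ⟨subset_convexHull 𝕜 _ (mem_insert_of_mem _ hv), (hs _ hv).le⟩
  · exact ⟨segment_subset_convexHull (mem_insert_of_mem _ hv) (mem_insert D _)
      (edgeCrossing_mem_segment (hs v hv).le hD.le),
      (map_edgeCrossing ((hs v hv).trans hD).ne).le⟩

end EdgeCrossing

def cutFunctional : (Fin 3 → ℝ) →ₗ[ℝ] ℝ := -LinearMap.proj 0 + (10 : ℝ) • LinearMap.proj 1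

lemma cutFunctional_apply (x : Fin 3 → ℝ) : cutFunctional x = -(x 0) + 10 * x 1 := rfl

lemma edgeCrossing_cutFunctional (ε : ℝ) :
    edgeCrossing cutFunctional (61/2 - ε) ![0,0,0] ![-(1/2), 3, 1/2] =
        ![-(1/2) + ε/61, 3 - 6*ε/61, 1/2 - ε/61] ∧
      edgeCrossing cutFunctional (61/2 - ε) ![1,0,0] ![-(1/2), 3, 1/2] =
        ![-(1/2) + ε/21, 3 - 2*ε/21, 1/2 - ε/63] ∧
      edgeCrossing cutFunctional (61/2 - ε) ![1,1,0] ![-(1/2), 3, 1/2] =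
        ![-(1/2) + 3*ε/43, 3 - 4*ε/43, 1/2 - ε/43] := by
  refine ⟨?_, ?_, ?_⟩ <;>
  · simp only [edgeCrossing, cutFunctional_apply, lineMap_apply_module]
    ext i
    fin_cases i <;>
      simp only [Fin.zero_eta, Fin.mk_one, Fin.reduceFinMk, Pi.add_apply, Pi.smul_apply,
        Matrix.cons_val, smul_eq_mul] <;>
      field_simp <;> ring

theorem stmt7 (ε : ℝ) (hε0 : 0 < ε) (hε1 : ε < 0.1) :
    convexHull ℝ ({![0,0,0], ![1,0,0], ![1,1,0], ![-(1/2), 3, 1/2]} : Set (Fin 3 → ℝ)) ∩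
        {x : Fin 3 → ℝ | -(x 0) + 10 * x 1 ≤ 61/2 - ε} =
      convexHull ℝ
        ({![0,0,0], ![1,0,0], ![1,1,0],
          ![-(1/2) + ε/21, 3 - 2*ε/21, 1/2 - ε/63],
          ![-(1/2) + 3*ε/43, 3 - 4*ε/43, 1/2 - ε/43],
          ![-(1/2) + ε/61, 3 - 6*ε/61, 1/2 - ε/61]} : Set (Fin 3 → ℝ)) := by
  have hε : ε < 1 / 10 := hε1.trans_eq (by norm_num)
  have hslice := convexHull_insert_inter_halfSpace (f := cutFunctional) (t := 61/2 - ε)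
    (D := ![-(1/2), 3, 1/2]) (s := {![0,0,0], ![1,0,0], ![1,1,0]})
    (by
      simp only [Finset.mem_insert, Finset.mem_singleton, forall_eq_or_imp, forall_eq,
        cutFunctional_apply, Matrix.cons_val_zero, Matrix.cons_val_one]
      refine ⟨?_, ?_, ?_⟩ <;> linarith)
    (by
      simp only [cutFunctional_apply, Matrix.cons_val_zero, Matrix.cons_val_one]
      linarith)
  obtain ⟨hA, hB, hC⟩ := edgeCrossing_cutFunctional ε
  convert hslice using 3
  · ext
    simp only [mem_insert_iff, mem_singleton_iff, Finset.coe_insert, Finset.coe_singleton]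
    tauto
  · rfl
  · rw [Finset.coe_insert, Finset.coe_insert, Finset.coe_singleton, image_insert_eq,
      image_insert_eq, image_singleton, hA, hB, hC]
    ext
    simp only [mem_insert_iff, mem_singleton_iff, mem_union]
    tauto
end

section
/- For every ε ∈ (0, 0.1), the cut -x₁ + 10x₂ ≤ 61/2 - 31ε separates each of the points (-1/2 + 3ε/4, 3 - 3ε/2, 1/2 - ε/4), (-1/2 + 3ε/4, 3 - ε, 1/2 - ε/4), (-1/2 + ε/2, 3 - 3ε, 1/2 - ε/2), and is valid for all points of {(0,0,0)} ∪ {(1,x₂,0) : x₂ ∈ [0,1]}. -/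
theorem stmt9 (ε : ℝ) (hε0 : 0 < ε) (hε1 : ε < 0.1) :
    (∀ x ∈ ({![-(1/2) + 3*ε/4, 3 - 3*ε/2, 1/2 - ε/4],
             ![-(1/2) + 3*ε/4, 3 - ε, 1/2 - ε/4],
             ![-(1/2) + ε/2, 3 - 3*ε, 1/2 - ε/2]} : Set (Fin 3 → ℝ)),
      -(x 0) + 10 * x 1 > 61/2 - 31*ε) ∧
    (∀ x ∈ (({![0,0,0]} : Set (Fin 3 → ℝ)) ∪
        {p : Fin 3 → ℝ | ∃ t : ℝ, 0 ≤ t ∧ t ≤ 1 ∧ p = ![1, t, 0]}),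
      -(x 0) + 10 * x 1 ≤ 61/2 - 31*ε) := by
  norm_num at hε1
  constructor
  · rintro x (rfl | rfl | rfl) <;> simp [Matrix.cons_val_zero, Matrix.cons_val_one] <;> nlinarith
  · rintro x (rfl | ⟨t, ht0, ht1, rfl⟩) <;> simp [Matrix.cons_val_zero, Matrix.cons_val_one] <;> nlinarith
end

section
/- For every d ∈ [0,1], a ≥ 0, and ε ∈ (0, 0.1), there exists a point x' among (-1/2 + 3ε/4, 3 - 3ε/2, 1/2 - ε/4), (-1/2 + 3ε/4, 3 - ε, 1/2 - ε/4), (-1/2 + ε/2, 3 - 3ε, 1/2 - ε/2) such that the objective x₁ - (10+d)x₂ - a·x₃ is strictly smaller at x' than at every point of {(0,0,0), (1,0,0), (1,1,0)}. -/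
theorem stmt13 (a d ε : ℝ) (ha : 0 ≤ a) (hd0 : 0 ≤ d) (hd1 : d ≤ 1)
    (hε0 : 0 < ε) (hε1 : ε < 0.1) :
    ∃ x' ∈ ({![-(1/2) + 3*ε/4, 3 - 3*ε/2, 1/2 - ε/4],
             ![-(1/2) + 3*ε/4, 3 - ε, 1/2 - ε/4],
             ![-(1/2) + ε/2, 3 - 3*ε, 1/2 - ε/2]} : Set (Fin 3 → ℝ)),
      ∀ y ∈ ({![0,0,0], ![1,0,0], ![1,1,0]} : Set (Fin 3 → ℝ)),
        x' 0 - (10 + d) * x' 1 - a * x' 2 < y 0 - (10 + d) * y 1 - a * y 2 := by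
  refine ⟨_, Or.inl rfl, ?_⟩
  rintro y (rfl | rfl | rfl) <;>
    simp only [Matrix.cons_val_zero, Matrix.cons_val_one, Matrix.head_cons,
      Matrix.cons_val_two, Matrix.tail_cons] <;>
    nlinarith [mul_nonneg ha hε0.le, mul_nonneg ha (by linarith : (0:ℝ) ≤ 1/2 - ε/4),
      mul_nonneg hd0 hε0.le, mul_nonneg hd0 (by linarith : (0:ℝ) ≤ 3 - 3*ε/2)]
end

section
/- For every d ∈ [0,1], a ≥ 0, and ε ∈ (0, 0.1), there exists a point x' among (-1/2 + ε/21, 3 - 2ε/21, 1/2 - ε/63), (-1/2 + 3ε/43, 3 - 4ε/43, 1/2 - ε/43), (-1/2 + ε/61, 3 - 6ε/61, 1/2 - ε/61) such that the objective x₁ - (10+d)x₂ - a·x₃ is strictly smaller at x' than at every point of {(0,0,0), (1,0,0), (1,1,0)}. -/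
theorem stmt14 (a d ε : ℝ) (ha : 0 ≤ a) (hd0 : 0 ≤ d) (hd1 : d ≤ 1)
    (hε0 : 0 < ε) (hε1 : ε < 0.1) :
    ∃ x' ∈ ({![-(1/2) + ε/21, 3 - 2*ε/21, 1/2 - ε/63],
             ![-(1/2) + 3*ε/43, 3 - 4*ε/43, 1/2 - ε/43],
             ![-(1/2) + ε/61, 3 - 6*ε/61, 1/2 - ε/61]} : Set (Fin 3 → ℝ)),
      ∀ y ∈ ({![0,0,0], ![1,0,0], ![1,1,0]} : Set (Fin 3 → ℝ)),
        x' 0 - (10 + d) * x' 1 - a * x' 2 < y 0 - (10 + d) * y 1 - a * y 2 := by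
  refine ⟨_, Or.inl rfl, ?_⟩
  rintro y (rfl | rfl | rfl) <;>
    simp [Matrix.cons_val_zero, Matrix.cons_val_one] <;>
    nlinarith [mul_nonneg ha hε0.le, mul_nonneg ha hd0, mul_nonneg hε0.le hd0]
end
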